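/- arXiv:1203.2685 — 8 statements merged into one kernel-verified Lean document; each statement's English description precedes it below -/
import Mathlib

section
/- For natural numbers n, m > 1 with at least one of n, m odd, the subgroup of (ℤ/2nm)⁴ generated by r₁ = (nm−n−m, nm+n−m, nm+n+m, nm−n+m) and r₂ = (nm+n−m, nm−n−m, nm−n+m, nm+n+m) contains the vectors (m, m, −m, −m) and (n, −n, −n, n). -/
/-- First row of the matrix defining `S(n,m)`, as a vector in `(ℤ/2nm)⁴`. -/
def row1 (n m : ℕ) : Fin 4 → ZMod (2*n*m) :=
  ![(((n:ℤ)*m - n - m : ℤ) : ZMod (2*n*m)), (((n:ℤ)*m + n - m : ℤ) : ZMod (2*n*m)),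
    (((n:ℤ)*m + n + m : ℤ) : ZMod (2*n*m)), (((n:ℤ)*m - n + m : ℤ) : ZMod (2*n*m))]

/-- Second row of the matrix defining `S(n,m)`. -/
def row2 (n m : ℕ) : Fin 4 → ZMod (2*n*m) :=
  ![(((n:ℤ)*m + n - m : ℤ) : ZMod (2*n*m)), (((n:ℤ)*m - n - m : ℤ) : ZMod (2*n*m)),
    (((n:ℤ)*m - n + m : ℤ) : ZMod (2*n*m)), (((n:ℤ)*m + n + m : ℤ) : ZMod (2*n*m))]

/-- The row span of `S(n,m)`: the additive subgroup of `(ℤ/2nm)⁴` generated by the two rows. -/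
def rowSpan (n m : ℕ) : AddSubgroup (Fin 4 → ZMod (2*n*m)) :=
  AddSubgroup.closure {row1 n m, row2 n m}

/-! Writing `u = (m, m, -m, -m)` and `v = (n, -n, -n, n)`, we have `r₁ + r₂ = -2u`,
`r₂ - r₁ = 2v` and, since `nm = -nm` modulo `2nm`, `r₁ + u + v = (nm, nm, nm, nm) = n u = m v`.
If `n = 2k + 1` is odd, then `v = k (2u) - r₁` and `u = m v - r₁ - v` lie in the span;
the case of odd `m` is symmetric. -/

theorem AddSubgroup.mem_and_mem_of_odd {G : Type*} [AddCommGroup G] {H : AddSubgroup G}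
    {r u v : G} {n m : ℕ} (hr : r ∈ H) (hu : 2 • u ∈ H) (hnu : n • u = r + u + v)
    (hmv : m • v = r + u + v) (hn : Odd n) : u ∈ H ∧ v ∈ H := by
  obtain ⟨k, rfl⟩ := hn
  have hv_eq : v = k • (2 • u) - r := by linear_combination (norm := module) -hnu
  have hv : v ∈ H := hv_eq ▸ sub_mem (nsmul_mem hu k) hr
  have hu_eq : u = m • v - r - v := by rw [hmv]; abel
  exact ⟨hu_eq ▸ sub_mem (sub_mem (nsmul_mem hv m) hr) hv, hv⟩

theorem AddSubgroup.mem_and_mem_of_odd_or_odd {G : Type*} [AddCommGroup G]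
    {H : AddSubgroup G} {r u v : G} {n m : ℕ} (hr : r ∈ H) (hu : 2 • u ∈ H) (hv : 2 • v ∈ H)
    (hnu : n • u = r + u + v) (hmv : m • v = r + u + v) (hodd : Odd n ∨ Odd m) :
    u ∈ H ∧ v ∈ H := by
  rcases hodd with hn | hm
  · exact mem_and_mem_of_odd hr hu hnu hmv hn
  · rw [add_right_comm] at hnu hmv
    exact (mem_and_mem_of_odd hr hv hmv hnu hm).symm

def mVec (n m : ℕ) : Fin 4 → ZMod (2*n*m) :=
  ![(((m:ℤ) : ℤ) : ZMod (2*n*m)), (((m:ℤ) : ℤ) : ZMod (2*n*m)),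
    ((-(m:ℤ) : ℤ) : ZMod (2*n*m)), ((-(m:ℤ) : ℤ) : ZMod (2*n*m))]

def nVec (n m : ℕ) : Fin 4 → ZMod (2*n*m) :=
  ![(((n:ℤ) : ℤ) : ZMod (2*n*m)), ((-(n:ℤ) : ℤ) : ZMod (2*n*m)),
    ((-(n:ℤ) : ℤ) : ZMod (2*n*m)), (((n:ℤ) : ℤ) : ZMod (2*n*m))]

theorem ZMod.two_mul_mul_eq_zero (n m : ℕ) : (2 * n * m : ZMod (2*n*m)) = 0 := by
  exact_mod_cast ZMod.natCast_self (2*n*m)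

theorem row1_add_row2 (n m : ℕ) : row1 n m + row2 n m = -(2 • mVec n m) := by
  have := ZMod.two_mul_mul_eq_zero n m
  ext i; fin_cases i <;> simp [row1, row2, mVec] <;> grind

theorem row2_sub_row1 (n m : ℕ) : row2 n m - row1 n m = 2 • nVec n m := by
  ext i; fin_cases i <;> simp [row1, row2, nVec] <;> ring

theorem nsmul_mVec (n m : ℕ) : n • mVec n m = row1 n m + mVec n m + nVec n m := by
  have := ZMod.two_mul_mul_eq_zero n m
  ext i; fin_cases i <;> simp [row1, mVec, nVec] <;> grind

theorem nsmul_nVec (n m : ℕ) : m • nVec n m = row1 n m + mVec n m + nVec n m := by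
  have := ZMod.two_mul_mul_eq_zero n m
  ext i; fin_cases i <;> simp [row1, mVec, nVec] <;> grind

theorem row1_mem_rowSpan (n m : ℕ) : row1 n m ∈ rowSpan n m :=
  AddSubgroup.subset_closure (Set.mem_insert _ _)

theorem row2_mem_rowSpan (n m : ℕ) : row2 n m ∈ rowSpan n m :=
  AddSubgroup.subset_closure (Set.mem_insert_of_mem _ rfl)

theorem stmt_2_general (n m : ℕ) (hodd : Odd n ∨ Odd m) :
    ![(((m:ℤ) : ℤ) : ZMod (2*n*m)), (((m:ℤ) : ℤ) : ZMod (2*n*m)),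
        ((-(m:ℤ) : ℤ) : ZMod (2*n*m)), ((-(m:ℤ) : ℤ) : ZMod (2*n*m))] ∈ rowSpan n m ∧
    ![(((n:ℤ) : ℤ) : ZMod (2*n*m)), ((-(n:ℤ) : ℤ) : ZMod (2*n*m)),
        ((-(n:ℤ) : ℤ) : ZMod (2*n*m)), (((n:ℤ) : ℤ) : ZMod (2*n*m))] ∈ rowSpan n m := by
  have h₁ := row1_mem_rowSpan n m
  have h₂ := row2_mem_rowSpan n m
  have hu : 2 • mVec n m ∈ rowSpan n m := by
    rw [← neg_neg (2 • mVec n m), ← row1_add_row2]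
    exact neg_mem (add_mem h₁ h₂)
  have hv : 2 • nVec n m ∈ rowSpan n m := row2_sub_row1 n m ▸ sub_mem h₂ h₁
  exact AddSubgroup.mem_and_mem_of_odd_or_odd h₁ hu hv (nsmul_mVec n m) (nsmul_nVec n m) hodd

/-- if `n` or `m` is odd, the row span of `S(n,m)` contains
`(m, m, −m, −m)` and `(n, −n, −n, n)`. -/
theorem stmt_2 (n m : ℕ) (hn : 1 < n) (hm : 1 < m) (hodd : Odd n ∨ Odd m) :
    ![(((m:ℤ) : ℤ) : ZMod (2*n*m)), (((m:ℤ) : ℤ) : ZMod (2*n*m)),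
        ((-(m:ℤ) : ℤ) : ZMod (2*n*m)), ((-(m:ℤ) : ℤ) : ZMod (2*n*m))] ∈ rowSpan n m ∧
    ![(((n:ℤ) : ℤ) : ZMod (2*n*m)), ((-(n:ℤ) : ℤ) : ZMod (2*n*m)),
        ((-(n:ℤ) : ℤ) : ZMod (2*n*m)), (((n:ℤ) : ℤ) : ZMod (2*n*m))] ∈ rowSpan n m :=
  stmt_2_general n m hodd
end

section
/- Let n, m > 1 and suppose n' divides n, m' divides m, with n = l·n' and m = k·m'. If n or m is odd, or if n and m are both even and k + l is even (equivalently n/n' + m/m' is even), then both row vectors of the matrix with rows (nm−kn−lm, nm+kn−lm, nm+kn+lm, nm−kn+lm) and (nm+kn−lm, nm−kn−lm, nm−kn+lm, nm+kn+lm), with entries taken modulo 2nm, lie in the subgroup of (ℤ/2nm)⁴ generated by (nm−n−m, nm+n−m, nm+n+m, nm−n+m) and (nm+n−m, nm−n−m, nm−n+m, nm+n+m). -/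
def sRow (n m : ℕ) (c k l : ℤ) : Fin 4 → ZMod (2*n*m) :=
  ![((c*n*m - k*n - l*m : ℤ) : ZMod (2*n*m)), ((c*n*m + k*n - l*m : ℤ) : ZMod (2*n*m)),
    ((c*n*m + k*n + l*m : ℤ) : ZMod (2*n*m)), ((c*n*m - k*n + l*m : ℤ) : ZMod (2*n*m))]

section

variable (n m : ℕ)

theorem zsmul_sRow_add_zsmul_sRow (a b c k l c' k' l' : ℤ) :
    a • sRow n m c k l + b • sRow n m c' k' l'
      = sRow n m (a*c + b*c') (a*k + b*k') (a*l + b*l') := by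
  ext i
  fin_cases i <;> simp [sRow] <;> ring

theorem sRow_add_kernel (c k l x u v : ℤ) :
    sRow n m (c + 2*x + u + v) (k + m*u) (l + n*v) = sRow n m c k l := by
  have h2nm : ((2*n*m : ℤ) : ZMod (2*n*m)) = 0 := by exact_mod_cast ZMod.natCast_self (2*n*m)
  push_cast at h2nm
  ext i
  fin_cases i <;> simp [sRow]
  · linear_combination x * h2nm
  · linear_combination (x + u) * h2nm
  · linear_combination (x + u + v) * h2nm
  · linear_combination (x + v) * h2nm

theorem row1_eq_sRow : row1 n m = sRow n m 1 1 1 := by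
  ext i
  fin_cases i <;> simp [row1, sRow]

theorem row2_eq_sRow : row2 n m = sRow n m 1 (-1) 1 := by
  ext i
  fin_cases i <;> simp [row2, sRow] <;> ring

theorem sRow_mem_rowSpan_of_even {c k l : ℤ} (u v : ℤ) (hkl : Even (k + l + m*u + n*v))
    (hcl : Even (c + l + u + (n + 1)*v)) : sRow n m c k l ∈ rowSpan n m := by
  obtain ⟨a, ha⟩ := hkl
  obtain ⟨s, hs⟩ := hcl
  have hcomb : a • row1 n m + (l + n*v - a) • row2 n m = sRow n m c k l := by
    rw [row1_eq_sRow, row2_eq_sRow, zsmul_sRow_add_zsmul_sRow,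
      ← sRow_add_kernel n m c k l (l + n*v - s) u v]
    congr 1
    · linear_combination -hs
    · linear_combination -ha
    · ring
  rw [← hcomb]
  exact add_mem (zsmul_mem (AddSubgroup.subset_closure (by simp)) _)
    (zsmul_mem (AddSubgroup.subset_closure (by simp)) _)

theorem sRow_one_mem_rowSpan_of_odd_left {k l : ℤ} (hn : Odd n) :
    sRow n m 1 k l ∈ rowSpan n m := by
  obtain ⟨p, hp⟩ := hn
  have hp : (n : ℤ) = 2*p + 1 := by exact_mod_cast hp
  set v := k + l + m*(l + 1)
  exact sRow_mem_rowSpan_of_even n m (l + 1) v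
    ⟨(p + 1) * v, by rw [hp]; ring⟩ ⟨l + 1 + (p + 1) * v, by rw [hp]; ring⟩

theorem sRow_one_mem_rowSpan_of_odd_right {k l : ℤ} (hm : Odd m) :
    sRow n m 1 k l ∈ rowSpan n m := by
  obtain ⟨q, hq⟩ := hm
  have hq : (m : ℤ) = 2*q + 1 := by exact_mod_cast hq
  set u := k + l + n*(k + 1)
  exact sRow_mem_rowSpan_of_even n m u (k + 1)
    ⟨(q + 1) * u, by rw [hq]; ring⟩ ⟨l + n*(k + 1) + k + 1, by ring⟩

theorem sRow_one_mem_rowSpan_of_even {k l : ℤ} (hm : Even m) (hkl : Even (k + l)) :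
    sRow n m 1 k l ∈ rowSpan n m := by
  obtain ⟨q, hq⟩ := hm
  obtain ⟨c, hc⟩ := hkl
  have hq : (m : ℤ) = q + q := by exact_mod_cast hq
  exact sRow_mem_rowSpan_of_even n m (l + 1) 0
    ⟨c + q*(l + 1), by rw [hq]; linear_combination hc⟩ ⟨l + 1, by ring⟩

theorem sRow_one_mem_rowSpan {k l : ℤ} (h : Odd n ∨ Odd m ∨ Even (k + l)) :
    sRow n m 1 k l ∈ rowSpan n m := by
  rcases h with hn | hm | hkl
  · exact sRow_one_mem_rowSpan_of_odd_left n m hn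
  · exact sRow_one_mem_rowSpan_of_odd_right n m hm
  · rcases Nat.even_or_odd m with hm | hm
    · exact sRow_one_mem_rowSpan_of_even n m hm hkl
    · exact sRow_one_mem_rowSpan_of_odd_right n m hm

end

theorem stmt_4_general (n m k l : ℕ)
    (hpar : (Odd n ∨ Odd m) ∨ (Even n ∧ Even m ∧ Even (k + l))) :
    ![(((n:ℤ)*m - k*n - l*m : ℤ) : ZMod (2*n*m)), (((n:ℤ)*m + k*n - l*m : ℤ) : ZMod (2*n*m)),
        (((n:ℤ)*m + k*n + l*m : ℤ) : ZMod (2*n*m)), (((n:ℤ)*m - k*n + l*m : ℤ) : ZMod (2*n*m))]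
      ∈ rowSpan n m ∧
    ![(((n:ℤ)*m + k*n - l*m : ℤ) : ZMod (2*n*m)), (((n:ℤ)*m - k*n - l*m : ℤ) : ZMod (2*n*m)),
        (((n:ℤ)*m - k*n + l*m : ℤ) : ZMod (2*n*m)), (((n:ℤ)*m + k*n + l*m : ℤ) : ZMod (2*n*m))]
      ∈ rowSpan n m := by
  have hkl : Odd n ∨ Odd m ∨ Even ((k : ℤ) + l) := by
    rcases hpar with (h | h) | ⟨-, -, h⟩
    exacts [.inl h, .inr (.inl h), .inr (.inr (by exact_mod_cast h))]
  have hnegkl : Odd n ∨ Odd m ∨ Even (-(k : ℤ) + l) := by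
    rwa [Int.even_add, even_neg, ← Int.even_add]
  constructor
  · convert sRow_one_mem_rowSpan n m hkl using 1
    ext i
    fin_cases i <;> simp [sRow]
  · convert sRow_one_mem_rowSpan n m hnegkl using 1
    ext i
    fin_cases i <;> simp [sRow] <;> ring

/-- if `n = l·n'`, `m = k·m'`, and either `n` or `m` is odd, or both are even
and `k + l` is even, then both rows of the matrix with entries
`(nm∓kn∓lm, …)` lie in the row span of `S(n,m)`. -/
theorem stmt_4 (n m n' m' k l : ℕ) (hn : 1 < n) (hm : 1 < m)
    (hn' : n = l * n') (hm' : m = k * m')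
    (hpar : (Odd n ∨ Odd m) ∨ (Even n ∧ Even m ∧ Even (k + l))) :
    ![(((n:ℤ)*m - k*n - l*m : ℤ) : ZMod (2*n*m)), (((n:ℤ)*m + k*n - l*m : ℤ) : ZMod (2*n*m)),
        (((n:ℤ)*m + k*n + l*m : ℤ) : ZMod (2*n*m)), (((n:ℤ)*m - k*n + l*m : ℤ) : ZMod (2*n*m))]
      ∈ rowSpan n m ∧
    ![(((n:ℤ)*m + k*n - l*m : ℤ) : ZMod (2*n*m)), (((n:ℤ)*m - k*n - l*m : ℤ) : ZMod (2*n*m)),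
        (((n:ℤ)*m - k*n + l*m : ℤ) : ZMod (2*n*m)), (((n:ℤ)*m + k*n + l*m : ℤ) : ZMod (2*n*m))]
      ∈ rowSpan n m :=
  stmt_4_general n m k l hpar
end

section
/- Let n, m > 1 with nm ≥ 6, and let N = 2nm. For r = (r₁, r₂, r₃, r₄) in the subgroup of (ℤ/N)⁴ generated by (nm−n−m, nm+n−m, nm+n+m, nm−n+m) and (nm+n−m, nm−n−m, nm−n+m, nm+n+m), define t_j(r) = {r_j/N} (fractional part of any integer representative divided by N) and t(r) = t₁(r)+t₂(r)+t₃(r)+t₄(r). If all four entries r_j are nonzero in ℤ/N, then t₁(r)+t₃(r) = 1 and t₂(r)+t₄(r) = 1, and hence t(r) = 2 and t(−r) = 2. -/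
/-- `t(x) = {r/N}`: the fractional part of (an integer representative of) `x` divided by `N`. -/
def tfrac {N : ℕ} (x : ZMod N) : ℚ := (x.val : ℚ) / N

theorem tfrac_add_tfrac_neg {N : ℕ} [NeZero N] {x : ZMod N} (hx : x ≠ 0) :
    tfrac x + tfrac (-x) = 1 := by
  have : NeZero x := ⟨hx⟩
  have hN : (N : ℚ) ≠ 0 := Nat.cast_ne_zero.mpr (NeZero.ne N)
  rw [tfrac, tfrac, ZMod.val_neg_of_ne_zero, ← add_div, ← Nat.cast_add,
    Nat.add_sub_cancel' x.val_lt.le, div_self hN]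

def antipodalPairs (M : Type*) [AddCommGroup M] : AddSubgroup (Fin 4 → M) where
  carrier := {r | r 2 = -r 0 ∧ r 3 = -r 1}
  add_mem' := by
    rintro r s ⟨hr2, hr3⟩ ⟨hs2, hs3⟩
    simp [hr2, hr3, hs2, hs3, add_comm]
  zero_mem' := by simp
  neg_mem' := by
    rintro r ⟨hr2, hr3⟩
    simp [hr2, hr3]

theorem intCast_eq_neg_intCast {N : ℕ} {a b : ℤ} (h : a + b = N) :
    (b : ZMod N) = -(a : ZMod N) := by
  rw [eq_neg_iff_add_eq_zero, add_comm, ← Int.cast_add, h, Int.cast_natCast, ZMod.natCast_self]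

theorem rowSpan_le_antipodalPairs (n m : ℕ) : rowSpan n m ≤ antipodalPairs (ZMod (2*n*m)) := by
  have h1 : ((n:ℤ)*m - n - m) + ((n:ℤ)*m + n + m) = ((2*n*m : ℕ) : ℤ) := by push_cast; ring
  have h2 : ((n:ℤ)*m + n - m) + ((n:ℤ)*m - n + m) = ((2*n*m : ℕ) : ℤ) := by push_cast; ring
  rw [rowSpan, AddSubgroup.closure_le, Set.insert_subset_iff, Set.singleton_subset_iff]
  exact ⟨⟨intCast_eq_neg_intCast h1, intCast_eq_neg_intCast h2⟩,
    ⟨intCast_eq_neg_intCast (by linarith), intCast_eq_neg_intCast (by linarith)⟩⟩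

theorem stmt_6_general (n m : ℕ) (hn : 1 < n) (hm : 1 < m)
    (r : Fin 4 → ZMod (2*n*m)) (hr : r ∈ rowSpan n m) (hnz : ∀ j, r j ≠ 0) :
    (tfrac (r 0) + tfrac (r 2) = 1 ∧ tfrac (r 1) + tfrac (r 3) = 1) ∧
    tfrac (r 0) + tfrac (r 1) + tfrac (r 2) + tfrac (r 3) = 2 ∧
    tfrac (-r 0) + tfrac (-r 1) + tfrac (-r 2) + tfrac (-r 3) = 2 := by
  have : NeZero (2*n*m) := ⟨by positivity⟩
  obtain ⟨hr2, hr3⟩ := rowSpan_le_antipodalPairs n m hr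
  have t0 := tfrac_add_tfrac_neg (hnz 0)
  have t1 := tfrac_add_tfrac_neg (hnz 1)
  rw [hr2, hr3, neg_neg, neg_neg]
  exact ⟨⟨t0, t1⟩, by linarith, by linarith⟩

/-- for `r` in the row span of `S(n,m)` with all entries nonzero,
`t₁+t₃ = 1`, `t₂+t₄ = 1`, hence `t(r) = 2` and `t(−r) = 2`. -/
theorem stmt_6 (n m : ℕ) (hn : 1 < n) (hm : 1 < m) (h6 : 6 ≤ n * m)
    (r : Fin 4 → ZMod (2*n*m)) (hr : r ∈ rowSpan n m) (hnz : ∀ j, r j ≠ 0) :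
    (tfrac (r 0) + tfrac (r 2) = 1 ∧ tfrac (r 1) + tfrac (r 3) = 1) ∧
    tfrac (r 0) + tfrac (r 1) + tfrac (r 2) + tfrac (r 3) = 2 ∧
    tfrac (-r 0) + tfrac (-r 1) + tfrac (-r 2) + tfrac (-r 3) = 2 :=
  stmt_6_general n m hn hm r hr hnz
end

section
/- Let n, m > 1 with nm ≥ 6 and N = 2nm. If r = (r₁, r₂, r₃, r₄) lies in the subgroup of (ℤ/N)⁴ generated by (nm−n−m, nm+n−m, nm+n+m, nm−n+m) and (nm+n−m, nm−n−m, nm−n+m, nm+n+m), and r satisfies r₁ = r₃ and r₂ = r₄ in ℤ/N with all entries nonzero, then r₁ = r₂ = r₃ = r₄ = nm in ℤ/N. -/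
/-!
Both generators have `r₁ + r₃ = r₂ + r₄ = 2nm`, so every element of the row span satisfies
`r₁ + r₃ = r₂ + r₄ = 0` in `ℤ/2nm`. Under `r₁ = r₃`, `r₂ = r₄` the entries are therefore
nonzero solutions of `2x = 0` in `ℤ/2nm`, and the only such solution is `nm`.
-/

theorem ZMod.eq_half_of_add_self_eq_zero {N k : ℕ} (hN : N = 2 * k) {x : ZMod N}
    (hx : x + x = 0) (hx0 : x ≠ 0) : x = k := by
  subst hN
  obtain ⟨a, rfl⟩ := ZMod.intCast_surjective x
  have h2a : ((2 * k : ℕ) : ℤ) ∣ 2 * a := by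
    rw [← ZMod.intCast_zmod_eq_zero_iff_dvd]
    push_cast
    linear_combination hx
  obtain ⟨t, rfl⟩ : (k : ℤ) ∣ a :=
    (mul_dvd_mul_iff_left two_ne_zero).mp (by exact_mod_cast h2a)
  have ht : Odd t := by
    refine Int.not_even_iff_odd.mp fun ⟨s, hs⟩ => hx0 ?_
    rw [ZMod.intCast_zmod_eq_zero_iff_dvd]
    exact ⟨s, by push_cast; rw [hs]; ring⟩
  obtain ⟨s, rfl⟩ := ht
  rw [← Int.cast_natCast (R := ZMod (2 * k)), ZMod.intCast_eq_intCast_iff_dvd_sub]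
  exact ⟨-s, by push_cast; ring⟩

def oppositeSums (R : Type*) [AddCommMonoid R] : (Fin 4 → R) →+ R × R :=
  AddMonoidHom.prod
    (Pi.evalAddMonoidHom (fun _ => R) 0 + Pi.evalAddMonoidHom (fun _ => R) 2)
    (Pi.evalAddMonoidHom (fun _ => R) 1 + Pi.evalAddMonoidHom (fun _ => R) 3)

theorem rowSpan_le_ker_oppositeSums (n m : ℕ) :
    rowSpan n m ≤ (oppositeSums (ZMod (2 * n * m))).ker := by
  have h2nm : ((2 * n * m : ℕ) : ZMod (2 * n * m)) = 0 := ZMod.natCast_self _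
  rw [rowSpan, AddSubgroup.closure_le]
  rintro s (rfl | rfl) <;>
  · simp only [SetLike.mem_coe, AddMonoidHom.mem_ker, oppositeSums, row1, row2,
      AddMonoidHom.prod_apply, AddMonoidHom.add_apply, Pi.evalAddMonoidHom_apply,
      Prod.mk_eq_zero]
    push_cast at h2nm ⊢
    constructor <;> linear_combination h2nm

theorem stmt_7_general (n m : ℕ)
    (r : Fin 4 → ZMod (2*n*m)) (hr : r ∈ rowSpan n m)
    (h13 : r 0 = r 2) (h24 : r 1 = r 3) (hnz : ∀ j, r j ≠ 0) :
    ∀ j, r j = ((n * m : ℕ) : ZMod (2*n*m)) := by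
  have hsums : r 0 + r 2 = 0 ∧ r 1 + r 3 = 0 := by
    simpa [oppositeSums] using rowSpan_le_ker_oppositeSums n m hr
  have hN : 2 * n * m = 2 * (n * m) := mul_assoc 2 n m
  have e0 : r 0 = (n * m : ℕ) :=
    ZMod.eq_half_of_add_self_eq_zero hN (by rw [h13] at hsums ⊢; exact hsums.1) (hnz 0)
  have e1 : r 1 = (n * m : ℕ) :=
    ZMod.eq_half_of_add_self_eq_zero hN (by rw [h24] at hsums ⊢; exact hsums.2) (hnz 1)
  intro j
  fin_cases j
  exacts [e0, e1, h13 ▸ e0, h24 ▸ e1]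

/-- if `r` is in the row span of `S(n,m)` with `r₁ = r₃`, `r₂ = r₄` and all
entries nonzero, then all entries equal `nm` in `ℤ/2nm`. -/
theorem stmt_7 (n m : ℕ) (hn : 1 < n) (hm : 1 < m) (h6 : 6 ≤ n * m)
    (r : Fin 4 → ZMod (2*n*m)) (hr : r ∈ rowSpan n m)
    (h13 : r 0 = r 2) (h24 : r 1 = r 3) (hnz : ∀ j, r j ≠ 0) :
    ∀ j, r j = ((n * m : ℕ) : ZMod (2*n*m)) :=
  stmt_7_general n m r hr h13 h24 hnz
end

section
/- If either n or m is odd (n, m > 1), then the subgroup of (ℤ/2nm)² generated by the columns vectors (−m, −m) and (−n, n) equals the subgroup generated by the four column vectors (nm−n−m, nm+n−m), (nm+n−m, nm−n−m), (nm+n+m, nm−n+m), (nm−n+m, nm+n+m), i.e., the column span of the matrix defining S(n,m). -/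
/-! With `a = (-m,-m)` and `b = (-n,n)` the four columns are `c₁ = (1-n)a + b`, `c₂ = c₁ - 2b`,
`c₃ = c₂ - 2a` and `c₄ = c₁ - 2a`, so they span `⟨c₁, 2a, 2b⟩ ≤ ⟨a, b⟩`. Modulo `2nm` one has
`n a = (-nm, -nm) = (-nm, nm) = m b`. If `n = 2k+1` this gives `b = c₁ + k(2a)` and
`a = m b - k(2a)`; if `m = 2k+1` it gives `a = c₁ + k(2b)` and then `b = c₁ - (1-n)a`. -/

/-- The column span of the matrix defining `S(n,m)`: the additive subgroup of `(ℤ/2nm)²`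
generated by the four columns. -/
def colSpan (n m : ℕ) : AddSubgroup (Fin 2 → ZMod (2*n*m)) :=
  AddSubgroup.closure
    {![(((n:ℤ)*m - n - m : ℤ) : ZMod (2*n*m)), (((n:ℤ)*m + n - m : ℤ) : ZMod (2*n*m))],
     ![(((n:ℤ)*m + n - m : ℤ) : ZMod (2*n*m)), (((n:ℤ)*m - n - m : ℤ) : ZMod (2*n*m))],
     ![(((n:ℤ)*m + n + m : ℤ) : ZMod (2*n*m)), (((n:ℤ)*m - n + m : ℤ) : ZMod (2*n*m))],
     ![(((n:ℤ)*m - n + m : ℤ) : ZMod (2*n*m)), (((n:ℤ)*m + n + m : ℤ) : ZMod (2*n*m))]}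

namespace AddSubgroup

variable {G : Type*} [AddCommGroup G] {a b : G} {n m : ℤ}

theorem closure_pair_eq_closure_of_zsmul_eq (hab : n • a = m • b) (hodd : Odd n ∨ Odd m) :
    closure {a, b} =
      closure {(1 - n) • a + b, (1 - n) • a - b, (-1 - n) • a - b, (-1 - n) • a + b} := by
  set K := closure {(1 - n) • a + b, (1 - n) • a - b, (-1 - n) • a - b, (-1 - n) • a + b}
  apply le_antisymm
  · have hc₁ : (1 - n) • a + b ∈ K := subset_closure (by simp)
    have h2a : (2 : ℤ) • a ∈ K := by
      have h := sub_mem hc₁ (subset_closure (by simp) : (-1 - n) • a + b ∈ K)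
      convert h using 1; module
    have h2b : (2 : ℤ) • b ∈ K := by
      have h := sub_mem hc₁ (subset_closure (by simp) : (1 - n) • a - b ∈ K)
      convert h using 1; module
    have hK : a ∈ K ∧ b ∈ K := by
      rcases hodd with ⟨k, rfl⟩ | ⟨k, rfl⟩
      · have hb : b ∈ K := by
          convert add_mem hc₁ (zsmul_mem h2a k) using 1; module
        refine ⟨?_, hb⟩
        convert sub_mem (zsmul_mem hb m) (zsmul_mem h2a k) using 1
        rw [← hab]; module
      · have ha : a ∈ K := by
          convert add_mem hc₁ (zsmul_mem h2b k) using 1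
          linear_combination (norm := module) hab
        refine ⟨ha, ?_⟩
        convert sub_mem hc₁ (zsmul_mem ha (1 - n)) using 1; module
    rw [closure_le, Set.insert_subset_iff, Set.singleton_subset_iff]
    exact hK
  · have ha : a ∈ closure {a, b} := subset_closure (by simp)
    have hb : b ∈ closure {a, b} := subset_closure (by simp)
    simp only [K, closure_le, Set.insert_subset_iff, Set.singleton_subset_iff, SetLike.mem_coe]
    refine ⟨?_, ?_, ?_, ?_⟩ <;> first
      | exact add_mem (zsmul_mem ha _) hb
      | exact sub_mem (zsmul_mem ha _) hb

end AddSubgroup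

theorem natCast_zsmul_generators_eq (n m : ℕ) :
    (n : ℤ) • ![((-(m:ℤ) : ℤ) : ZMod (2*n*m)), ((-(m:ℤ) : ℤ) : ZMod (2*n*m))] =
      (m : ℤ) • ![((-(n:ℤ) : ℤ) : ZMod (2*n*m)), (((n:ℤ) : ℤ) : ZMod (2*n*m))] := by
  have h : ((2 * n * m : ℕ) : ZMod (2 * n * m)) = 0 := ZMod.natCast_self _
  push_cast at h
  simp only [Matrix.smul_cons, Matrix.smul_empty, Matrix.vecCons_inj, zsmul_eq_mul, and_true]
  push_cast
  constructor
  · ring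
  · linear_combination -h

theorem stmt_8_general (n m : ℕ) (hodd : Odd n ∨ Odd m) :
    AddSubgroup.closure
      ({![((-(m:ℤ) : ℤ) : ZMod (2*n*m)), ((-(m:ℤ) : ℤ) : ZMod (2*n*m))],
        ![((-(n:ℤ) : ℤ) : ZMod (2*n*m)), (((n:ℤ) : ℤ) : ZMod (2*n*m))]} :
        Set (Fin 2 → ZMod (2*n*m)))
      = colSpan n m := by
  rw [AddSubgroup.closure_pair_eq_closure_of_zsmul_eq (natCast_zsmul_generators_eq n m)
    (by simpa only [Int.odd_coe_nat] using hodd), colSpan]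
  congr!
  all_goals
    simp only [Matrix.smul_cons, Matrix.smul_empty, Matrix.cons_add_cons, Matrix.cons_sub_cons,
      Matrix.empty_add_empty, Matrix.empty_sub_empty, Matrix.vecCons_inj, zsmul_eq_mul, and_true]
    constructor <;> push_cast <;> ring

/-- if `n` or `m` is odd, the subgroup of `(ℤ/2nm)²` generated by
`(−m,−m)` and `(−n,n)` equals the column span of `S(n,m)`. -/
theorem stmt_8 (n m : ℕ) (hn : 1 < n) (hm : 1 < m) (hodd : Odd n ∨ Odd m) :
    AddSubgroup.closure
      ({![((-(m:ℤ) : ℤ) : ZMod (2*n*m)), ((-(m:ℤ) : ℤ) : ZMod (2*n*m))],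
        ![((-(n:ℤ) : ℤ) : ZMod (2*n*m)), (((n:ℤ) : ℤ) : ZMod (2*n*m))]} :
        Set (Fin 2 → ZMod (2*n*m)))
      = colSpan n m :=
  stmt_8_general n m hodd
end

section
/- If n and m are both even (n, m > 1), then the subgroup of (ℤ/2nm)² generated by (−2m, −2m), (−2n, 2n), and (−n−m, n−m) equals the column span of the matrix with columns (nm−n−m, nm+n−m), (nm+n−m, nm−n−m), (nm+n+m, nm−n+m), (nm−n+m, nm+n+m) in (ℤ/2nm)². -/
theorem AddSubgroup.closure_add_sub_zsmul_eq_closure_neg {G : Type*} [AddCommGroup G]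
    {g₁ g₂ g₃ c₁ c₂ c₃ c₄ : G} (k : ℤ) (h₁ : g₁ = c₁ + c₂) (h₂ : g₂ = c₁ - c₂)
    (h₃ : g₃ = (1 - k) • c₁ - k • c₂) (h₄ : c₃ = -c₁) (h₅ : c₄ = -c₂) :
    closure {g₁, g₂, g₃} = closure {c₁, c₂, c₃, c₄} := by
  subst h₁ h₂ h₃ h₄ h₅
  apply le_antisymm
  · have hc₁ : c₁ ∈ closure {c₁, c₂, -c₁, -c₂} := subset_closure (by simp)
    have hc₂ : c₂ ∈ closure {c₁, c₂, -c₁, -c₂} := subset_closure (by simp)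
    rw [closure_le]
    rintro _ (rfl | rfl | rfl)
    exacts [add_mem hc₁ hc₂, sub_mem hc₁ hc₂, sub_mem (zsmul_mem hc₁ _) (zsmul_mem hc₂ _)]
  · set H := closure {c₁ + c₂, c₁ - c₂, (1 - k) • c₁ - k • c₂}
    have hc₁ : c₁ ∈ H := by
      have : (1 - k) • c₁ - k • c₂ + k • (c₁ + c₂) ∈ H :=
        add_mem (subset_closure (by simp)) (zsmul_mem (subset_closure (by simp)) k)
      convert this using 1
      module
    have hc₂ : c₂ ∈ H := by
      have : c₁ - (c₁ - c₂) ∈ H := sub_mem hc₁ (subset_closure (by simp))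
      simpa using this
    rw [closure_le]
    rintro _ (rfl | rfl | rfl | rfl)
    exacts [hc₁, hc₂, neg_mem hc₁, neg_mem hc₂]

theorem stmt_9_general (n m : ℕ) (hne : Even n) :
    AddSubgroup.closure
      ({![((-(2*(m:ℤ)) : ℤ) : ZMod (2*n*m)), ((-(2*(m:ℤ)) : ℤ) : ZMod (2*n*m))],
        ![((-(2*(n:ℤ)) : ℤ) : ZMod (2*n*m)), ((2*(n:ℤ) : ℤ) : ZMod (2*n*m))],
        ![((-(n:ℤ) - m : ℤ) : ZMod (2*n*m)), (((n:ℤ) - m : ℤ) : ZMod (2*n*m))]} :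
        Set (Fin 2 → ZMod (2*n*m)))
      = colSpan n m := by
  obtain ⟨k, rfl⟩ := hne
  have h2nm : (2 * (k + k) * m : ZMod (2 * (k + k) * m)) = 0 := by
    exact_mod_cast ZMod.natCast_self (2 * (k + k) * m)
  refine AddSubgroup.closure_add_sub_zsmul_eq_closure_neg k ?_ ?_ ?_ ?_ ?_ <;> ext i <;> fin_cases i
    <;> simp only [Fin.zero_eta, Fin.mk_one, Matrix.cons_val_zero, Matrix.cons_val_one,
      Matrix.cons_val_fin_one, Pi.add_apply, Pi.sub_apply, Pi.neg_apply, Pi.smul_apply]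
    <;> push_cast [zsmul_eq_mul]
  · linear_combination -h2nm
  · linear_combination -h2nm
  · ring
  · ring
  · linear_combination ((k : ZMod (2 * (k + k) * m)) - 1) * h2nm
  · linear_combination ((k : ZMod (2 * (k + k) * m)) - 1) * h2nm
  all_goals linear_combination h2nm

/-- if `n` and `m` are both even, the subgroup of `(ℤ/2nm)²` generated by
`(−2m,−2m)`, `(−2n,2n)`, `(−n−m, n−m)` equals the column span of `S(n,m)`. -/
theorem stmt_9 (n m : ℕ) (hn : 1 < n) (hm : 1 < m) (hne : Even n) (hme : Even m) :
    AddSubgroup.closure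
      ({![((-(2*(m:ℤ)) : ℤ) : ZMod (2*n*m)), ((-(2*(m:ℤ)) : ℤ) : ZMod (2*n*m))],
        ![((-(2*(n:ℤ)) : ℤ) : ZMod (2*n*m)), ((2*(n:ℤ) : ℤ) : ZMod (2*n*m))],
        ![((-(n:ℤ) - m : ℤ) : ZMod (2*n*m)), (((n:ℤ) - m : ℤ) : ZMod (2*n*m))]} :
        Set (Fin 2 → ZMod (2*n*m)))
      = colSpan n m :=
  stmt_9_general n m hne
end

section
/- Let n, m ≥ 2, l = lcm(n, m), γ = gcd(n, m), and let F = ℚ(ζ₂ₙ + ζ₂ₙ⁻¹, ζ₂ₘ + ζ₂ₘ⁻¹) ⊆ ℚ(ζ₂ₗ), where ζ_k = exp(2πi/k). Then [F : ℚ] = φ(2l)/4 if γ = 1, and [F : ℚ] = φ(2l)/2 if γ > 1. -/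
/-!
The field `ℚ(ζ_N)`, `N = lcm(2n, 2m) = 2·lcm(n, m)`, contains `F` and has Galois group `(ℤ/N)ˣ`,
with `u` acting by `ζ ↦ ζ^u` on all `N`-th roots of unity. Since `ζ_k^u + ζ_k^{-u} = ζ_k + ζ_k⁻¹`
exactly when `u ≡ ±1 (mod k)`, `F` is the fixed field of the units that are `±1` modulo both `2n`
and `2m`. As `ℤ/N` embeds into `ℤ/2n × ℤ/2m`, such a unit is determined by its pair of signs;
the pairs `(1, 1)` and `(-1, -1)` always occur, and the mixed ones occur iff
`gcd(2n, 2m) ∣ 2`, i.e. iff `gcd(n, m) = 1`. So `[ℚ(ζ_N) : F]` is `4` or `2`.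
-/

open Polynomial IntermediateField

theorem add_inv_eq_add_inv_iff {K : Type*} [Field K] {u v : K} (hu : u ≠ 0) (hv : v ≠ 0) :
    u + u⁻¹ = v + v⁻¹ ↔ u = v ∨ u = v⁻¹ := by
  have key : u + u⁻¹ - (v + v⁻¹) = (u - v) * (u - v⁻¹) * u⁻¹ := by
    field_simp
    ring
  rw [← sub_eq_zero, key]
  simp [sub_eq_zero, hu]

theorem IsPrimitiveRoot.zpow_eq_zpow_iff {K : Type*} [Field K] {ζ : K} {k : ℕ} [NeZero k]
    (hζ : IsPrimitiveRoot ζ k) (i j : ℤ) : ζ ^ i = ζ ^ j ↔ (i : ZMod k) = j := by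
  have hζ0 := hζ.ne_zero (NeZero.ne k)
  rw [ZMod.intCast_eq_intCast_iff_dvd_sub, ← hζ.zpow_eq_one_iff_dvd, zpow_sub₀ hζ0,
    div_eq_one_iff_eq (zpow_ne_zero _ hζ0), eq_comm]

theorem IsPrimitiveRoot.pow_add_inv_eq_add_inv_iff {K : Type*} [Field K] {ζ : K} {k : ℕ}
    [NeZero k] (hζ : IsPrimitiveRoot ζ k) (j : ℕ) :
    ζ ^ j + (ζ ^ j)⁻¹ = ζ + ζ⁻¹ ↔ (j : ZMod k) ∈ ({1, -1} : Set (ZMod k)) := by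
  have hζ0 := hζ.ne_zero (NeZero.ne k)
  rw [add_inv_eq_add_inv_iff (pow_ne_zero _ hζ0) hζ0, Set.mem_insert_iff, Set.mem_singleton_iff]
  exact or_congr (by simpa using hζ.zpow_eq_zpow_iff j 1)
    (by simpa using hζ.zpow_eq_zpow_iff j (-1))

theorem IntermediateField.mem_fixingSubgroup_adjoin_iff {F E : Type*} [Field F] [Field E]
    [Algebra F E] (S : Set E) (σ : Gal(E/F)) :
    σ ∈ (adjoin F S).fixingSubgroup ↔ ∀ x ∈ S, σ x = x := by
  rw [← Subgroup.zpowers_le, ← le_iff_le, adjoin_le_iff]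
  simp only [Set.subset_def, SetLike.mem_coe, mem_fixedField_iff, Subgroup.forall_mem_zpowers]
  exact forall₂_congr fun x _ ↦ MulAction.mem_fixedBy_zpowers_iff_mem_fixedBy (g := σ) (a := x)

theorem IntermediateField.finrank_adjoin_image {K L M : Type*} [Field K] [Field L] [Field M]
    [Algebra K L] [Algebra K M] (f : L →ₐ[K] M) (S : Set L) :
    Module.finrank K (adjoin K (f '' S)) = Module.finrank K (adjoin K S) := by
  rw [← adjoin_map]
  exact (equivMap _ f).toLinearEquiv.finrank_eq.symm

theorem IsPrimitiveRoot.isCyclotomicExtension_adjoin_simple {K L : Type*} [Field K] [Field L]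
    [Algebra K L] {N : ℕ} [NeZero N] {ζ : L} (hζ : IsPrimitiveRoot ζ N) :
    IsCyclotomicExtension {N} K K⟮ζ⟯ := by
  change IsCyclotomicExtension {N} K K⟮ζ⟯.toSubalgebra
  rw [adjoin_simple_toSubalgebra_of_isAlgebraic
    (hζ.isIntegral (NeZero.pos N)).tower_top.isAlgebraic]
  exact hζ.adjoin_isCyclotomicExtension K

namespace ZMod

def unitsPmOneMod (N a b : ℕ) : Set (ZMod N)ˣ :=
  {u | ((u : ZMod N).cast : ZMod a) ∈ ({1, -1} : Set (ZMod a)) ∧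
    ((u : ZMod N).cast : ZMod b) ∈ ({1, -1} : Set (ZMod b))}

variable (a b : ℕ)

theorem castHom_lcm_injective :
    Function.Injective (castHom dvd_rfl (ZMod a × ZMod b) : ZMod (a.lcm b) →+* _) :=
  castHom_injective _

theorem exists_castHom_lcm_eq_one_neg_one_iff :
    (∃ x : ZMod (a.lcm b), castHom dvd_rfl (ZMod a × ZMod b) x = (1, -1)) ↔ a.gcd b ∣ 2 := by
  simp only [Prod.ext_iff, castHom_apply, Prod.fst_zmod_cast, Prod.snd_zmod_cast]
  constructor
  · rintro ⟨x, hxa, hxb⟩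
    obtain ⟨k, rfl⟩ := intCast_surjective x
    rw [cast_intCast (Nat.dvd_lcm_left a b), ← Int.cast_one, intCast_eq_intCast_iff_dvd_sub]
      at hxa
    rw [cast_intCast (Nat.dvd_lcm_right a b), ← Int.cast_one, ← Int.cast_neg,
      intCast_eq_intCast_iff_dvd_sub] at hxb
    have hg : ((a.gcd b : ℕ) : ℤ) ∣ (1 - k) - (-1 - k) :=
      dvd_sub ((Int.natCast_dvd_natCast.2 (Nat.gcd_dvd_left a b)).trans hxa)
        ((Int.natCast_dvd_natCast.2 (Nat.gcd_dvd_right a b)).trans hxb)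
    rw [show (1 - k) - (-1 - k) = ((2 : ℕ) : ℤ) by ring] at hg
    exact Int.natCast_dvd_natCast.1 hg
  · intro hg
    obtain ⟨s, t, hst⟩ := (Int.gcd_dvd_iff (a := a) (b := b) (n := 2)).1
      (by rwa [Int.gcd_natCast_natCast])
    refine ⟨((1 - a * s : ℤ) : ZMod (a.lcm b)), ?_, ?_⟩
    · rw [cast_intCast (Nat.dvd_lcm_left a b)]
      simp
    · rw [cast_intCast (Nat.dvd_lcm_right a b),
        show 1 - (a : ℤ) * s = b * t - 1 by push_cast at hst; linarith]
      simp

theorem exists_units_castHom_lcm_eq_iff {y : ZMod a} {z : ZMod b} (hy : y * y = 1)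
    (hz : z * z = 1) :
    (∃ u : (ZMod (a.lcm b))ˣ, castHom dvd_rfl (ZMod a × ZMod b) (u : ZMod (a.lcm b)) = (y, z)) ↔
      ∃ x : ZMod (a.lcm b), castHom dvd_rfl (ZMod a × ZMod b) x = (y, z) := by
  refine ⟨fun ⟨u, hu⟩ ↦ ⟨u, hu⟩, fun ⟨x, hx⟩ ↦ ?_⟩
  have hxx : x * x = 1 := castHom_lcm_injective a b <| by
    rw [map_mul, hx, Prod.mk_mul_mk, hy, hz, map_one, Prod.mk_one_one]
  exact ⟨Units.mkOfMulEqOne x x hxx, hx⟩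

theorem ncard_unitsPmOneMod_lcm [Fact (2 < a)] [Fact (2 < b)] :
    (unitsPmOneMod (a.lcm b) a b).ncard = if a.gcd b ∣ 2 then 4 else 2 := by
  let ψ := castHom dvd_rfl (ZMod a × ZMod b)
  let f (u : (ZMod (a.lcm b))ˣ) : ZMod a × ZMod b := ψ u
  have hf : Function.Injective f := fun u v huv ↦ Units.ext (castHom_lcm_injective a b huv)
  have hneg {y : ZMod a} {z : ZMod b} : (y, z) ∈ Set.range f → (-y, -z) ∈ Set.range f :=
    fun ⟨u, hu⟩ ↦ ⟨-u, by simp only [f, Units.val_neg, map_neg] at hu ⊢; rw [hu]; rfl⟩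
  have h₁₁ : (1, 1) ∈ Set.range f := ⟨1, map_one ψ⟩
  have h₂₂ : (-1, -1) ∈ Set.range f := hneg h₁₁
  have h₁₂ : (1, -1) ∈ Set.range f ↔ a.gcd b ∣ 2 :=
    (exists_units_castHom_lcm_eq_iff a b (mul_one 1) (by simp)).trans
      (exists_castHom_lcm_eq_one_neg_one_iff a b)
  have h₂₁ : (-1, 1) ∈ Set.range f ↔ a.gcd b ∣ 2 :=
    ⟨fun h ↦ h₁₂.1 (by simpa using hneg h), fun h ↦ by simpa using hneg (h₁₂.2 h)⟩
  have hpre : unitsPmOneMod (a.lcm b) a b = f ⁻¹' (({1, -1} : Set (ZMod a)) ×ˢ {1, -1}) := by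
    ext u
    simp [unitsPmOneMod, f, ψ]
  rw [hpre, ← Set.ncard_image_of_injective _ hf, Set.image_preimage_eq_inter_range]
  split_ifs with hg
  · rw [Set.inter_eq_left.2, Set.ncard_prod, Set.ncard_pair neg_one_ne_one.symm,
      Set.ncard_pair neg_one_ne_one.symm]
    rintro ⟨y, z⟩ ⟨rfl | rfl, rfl | rfl⟩
    exacts [h₁₁, h₁₂.2 hg, h₂₁.2 hg, h₂₂]
  · have : (({1, -1} : Set (ZMod a)) ×ˢ {1, -1}) ∩ Set.range f = {(1, 1), (-1, -1)} := by
      refine Set.Subset.antisymm ?_ (Set.insert_subset_iff.2 ⟨⟨⟨Or.inl rfl, Or.inl rfl⟩, h₁₁⟩,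
        Set.singleton_subset_iff.2 ⟨⟨Or.inr rfl, Or.inr rfl⟩, h₂₂⟩⟩)
      rintro ⟨y, z⟩ ⟨⟨rfl | rfl, rfl | rfl⟩, hp⟩
      exacts [Or.inl rfl, (hg (h₁₂.1 hp)).elim, (hg (h₂₁.1 hp)).elim, Or.inr rfl]
    rw [this, Set.ncard_pair (by simp [neg_one_ne_one.symm])]

end ZMod

namespace IsCyclotomicExtension

variable {K L : Type*} [Field K] [Field L] [Algebra K L] {N : ℕ} [NeZero N]
  [IsCyclotomicExtension {N} K L]

theorem autEquivPow_apply_of_pow_eq_one (h : Irreducible (cyclotomic N K)) (σ : Gal(L/K))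
    {w : L} (hw : w ^ N = 1) :
    σ w = w ^ (autEquivPow L h σ : ZMod N).val := by
  obtain ⟨j, -, rfl⟩ := (zeta_spec N K L).eq_pow_of_pow_eq_one hw
  rw [map_pow, autEquivPow_apply, ← (zeta_spec N K L).autToPow_spec K, ← pow_mul, ← pow_mul,
    mul_comm]
  rfl

theorem map_add_inv_eq_iff (h : Irreducible (cyclotomic N K)) {k : ℕ} (hk : k ∣ N) {w : L}
    (hw : IsPrimitiveRoot w k) (σ : Gal(L/K)) :
    σ (w + w⁻¹) = w + w⁻¹ ↔
      ((autEquivPow L h σ : ZMod N).cast : ZMod k) ∈ ({1, -1} : Set (ZMod k)) := by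
  have : NeZero k := ⟨by rintro rfl; exact NeZero.ne N (Nat.eq_zero_of_zero_dvd hk)⟩
  rw [map_add, map_inv₀, autEquivPow_apply_of_pow_eq_one h σ ((hw.pow_eq_one_iff_dvd N).2 hk),
    hw.pow_add_inv_eq_add_inv_iff, ZMod.natCast_val]

theorem finrank_adjoin_add_inv_mul_ncard (h : Irreducible (cyclotomic N K)) {a b : ℕ}
    (ha : a ∣ N) (hb : b ∣ N) {w₁ w₂ : L} (hw₁ : IsPrimitiveRoot w₁ a)
    (hw₂ : IsPrimitiveRoot w₂ b) :
    Module.finrank K K⟮w₁ + w₁⁻¹, w₂ + w₂⁻¹⟯ * (ZMod.unitsPmOneMod N a b).ncard = N.totient := by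
  have := isGalois {N} K L
  have := finiteDimensional {N} K L
  have hfix : ∀ σ : Gal(L/K), σ ∈ K⟮w₁ + w₁⁻¹, w₂ + w₂⁻¹⟯.fixingSubgroup ↔
      autEquivPow L h σ ∈ ZMod.unitsPmOneMod N a b := by
    intro σ
    simp only [mem_fixingSubgroup_adjoin_iff, Set.mem_insert_iff, Set.mem_singleton_iff,
      forall_eq_or_imp, forall_eq, map_add_inv_eq_iff h ha hw₁, map_add_inv_eq_iff h hb hw₂]
    rfl
  rw [← Nat.card_coe_set_eq, ← Nat.card_congr ((autEquivPow L h).toEquiv.subtypeEquiv hfix),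
    IsGalois.card_fixingSubgroup_eq_finrank, Module.finrank_mul_finrank, finrank L h]

end IsCyclotomicExtension

theorem IsPrimitiveRoot.finrank_adjoin_add_inv_mul_ncard {K L : Type*} [Field K] [Field L]
    [Algebra K L] {N a b : ℕ} [NeZero N] (h : Irreducible (cyclotomic N K)) {ζ w₁ w₂ : L}
    (hζ : IsPrimitiveRoot ζ N) (ha : a ∣ N) (hb : b ∣ N) (hw₁ : IsPrimitiveRoot w₁ a)
    (hw₂ : IsPrimitiveRoot w₂ b) :
    Module.finrank K K⟮w₁ + w₁⁻¹, w₂ + w₂⁻¹⟯ * (ZMod.unitsPmOneMod N a b).ncard = N.totient := by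
  have := hζ.isCyclotomicExtension_adjoin_simple (K := K)
  have hmem {w : L} {k : ℕ} (hw : IsPrimitiveRoot w k) (hk : k ∣ N) : w ∈ K⟮ζ⟯ := by
    obtain ⟨j, -, rfl⟩ := hζ.eq_pow_of_pow_eq_one ((hw.pow_eq_one_iff_dvd N).2 hk)
    exact pow_mem (mem_adjoin_simple_self K ζ) j
  let v₁ : K⟮ζ⟯ := ⟨w₁, hmem hw₁ ha⟩
  let v₂ : K⟮ζ⟯ := ⟨w₂, hmem hw₂ hb⟩
  have himage : K⟮ζ⟯.val '' {v₁ + v₁⁻¹, v₂ + v₂⁻¹} = {w₁ + w₁⁻¹, w₂ + w₂⁻¹} := by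
    simp [Set.image_insert_eq, v₁, v₂]
  rw [← himage, finrank_adjoin_image]
  exact IsCyclotomicExtension.finrank_adjoin_add_inv_mul_ncard h ha hb
    (IsPrimitiveRoot.coe_submonoidClass_iff.1 hw₁) (IsPrimitiveRoot.coe_submonoidClass_iff.1 hw₂)

open Complex in
/-- with `ζ_k = exp(2πi/k)` and `F = ℚ(ζ₂ₙ+ζ₂ₙ⁻¹, ζ₂ₘ+ζ₂ₘ⁻¹)`,
the degree `[F : ℚ]` is `φ(2·lcm(n,m))/4` if `gcd(n,m) = 1` and `φ(2·lcm(n,m))/2` otherwise. -/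
theorem stmt_10 (n m : ℕ) (hn : 2 ≤ n) (hm : 2 ≤ m) :
    let ζ : ℕ → ℂ := fun k => Complex.exp (2 * Real.pi * Complex.I / k)
    let F : IntermediateField ℚ ℂ :=
      IntermediateField.adjoin ℚ {ζ (2*n) + (ζ (2*n))⁻¹, ζ (2*m) + (ζ (2*m))⁻¹}
    (Nat.gcd n m = 1 →
      (Module.finrank ℚ F : ℚ) = (Nat.totient (2 * Nat.lcm n m) : ℚ) / 4) ∧
    (1 < Nat.gcd n m →
      (Module.finrank ℚ F : ℚ) = (Nat.totient (2 * Nat.lcm n m) : ℚ) / 2) := by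
  intro ζ F
  have hζ (k : ℕ) (hk : k ≠ 0) : IsPrimitiveRoot (ζ k) k := Complex.isPrimitiveRoot_exp k hk
  have : Fact (2 < 2 * n) := ⟨by omega⟩
  have : Fact (2 < 2 * m) := ⟨by omega⟩
  have : NeZero ((2 * n).lcm (2 * m)) := ⟨Nat.lcm_ne_zero (by omega) (by omega)⟩
  have key := (hζ _ (NeZero.ne _)).finrank_adjoin_add_inv_mul_ncard
    (cyclotomic.irreducible_rat (NeZero.pos _)) (Nat.dvd_lcm_left _ _) (Nat.dvd_lcm_right _ _)
    (hζ (2 * n) (by omega)) (hζ (2 * m) (by omega))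
  rw [ZMod.ncard_unitsPmOneMod_lcm, Nat.gcd_mul_left, Nat.lcm_mul_left] at key
  refine ⟨fun h ↦ ?_, fun h ↦ ?_⟩
  · rw [h, if_pos dvd_rfl] at key
    rw [eq_div_iff (by norm_num)]
    exact_mod_cast key
  · rw [if_neg fun h2 ↦ by have := Nat.le_of_dvd two_pos h2; omega] at key
    rw [eq_div_iff (by norm_num)]
    exact_mod_cast key
end

section
/- Let n, m > 1 with nm ≥ 6 and N = 2nm. For any r in the row span of S(n,m) (the subgroup of (ℤ/N)⁴ generated by (nm−n−m, nm+n−m, nm+n+m, nm−n+m) and (nm+n−m, nm−n−m, nm−n+m, nm+n+m)) with all entries nonzero, the quantity λ(r) = 2·min_{j∈{1,2,3,4}} min(t_j(−r), 1 − t_j(−r)) / (1 − 1/n − 1/m) is a positive rational number and is an integer multiple of gcd(n,m)/(nm − n − m). -/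
/-!
Every entry of both generators is `nm ± n ± m`, so reduction modulo `d = gcd n m` kills the
whole row span. Hence the distance `min(v, N - v)` from each entry of `-r` to `0` in `ℤ/N` is a
multiple of `d`, and it is positive because the entry is nonzero. The minimum in `λ` is `k/N` for
the least such distance `k`, and `1 - 1/n - 1/m = (nm - n - m)/(nm)` gives `λ = k/(nm - n - m)`,
whose denominator is positive once `n, m ≥ 2` and `nm ≥ 6`.
-/

lemma gcd_dvd_valMinAbs_of_mem_rowSpan {n m : ℕ} {r : Fin 4 → ZMod (2*n*m)}
    (hr : r ∈ rowSpan n m) (j : Fin 4) : (Nat.gcd n m : ℤ) ∣ (r j).valMinAbs := by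
  set d := Nat.gcd n m
  have hdN : d ∣ 2*n*m := (Nat.gcd_dvd_left n m).trans ⟨2*m, by ring⟩
  let f := ZMod.castHom hdN (ZMod d)
  have hn : (n : ZMod d) = 0 := (ZMod.natCast_eq_zero_iff n d).2 (Nat.gcd_dvd_left n m)
  have hm : (m : ZMod d) = 0 := (ZMod.natCast_eq_zero_iff m d).2 (Nat.gcd_dvd_right n m)
  have hrows : rowSpan n m ≤ AddSubgroup.pi Set.univ fun _ => f.toAddMonoidHom.ker := by
    refine AddSubgroup.closure_le _ |>.2 ?_
    rintro _ (rfl | rfl) <;> rw [SetLike.mem_coe, AddSubgroup.mem_pi] <;> intro j _ <;>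
      fin_cases j <;> simp [row1, row2, hn, hm]
  rw [← ZMod.intCast_zmod_eq_zero_iff_dvd, ← map_intCast f, ZMod.coe_valMinAbs]
  exact hrows hr j trivial

lemma min_tfrac_one_sub_tfrac {N : ℕ} [NeZero N] (x : ZMod N) :
    min (tfrac x) (1 - tfrac x) = (x.valMinAbs.natAbs : ℚ) / N := by
  have hN : (0 : ℚ) < N := by exact_mod_cast Nat.pos_of_neZero N
  have hsub : 1 - tfrac x = ((N - x.val : ℕ) : ℚ) / N := by
    rw [tfrac, Nat.cast_sub x.val_lt.le]
    field_simp
  rw [hsub, tfrac, min_div_div_right hN.le, ← Nat.cast_min, ZMod.valMinAbs_natAbs_eq_min]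

lemma two_mul_div_div_one_sub_one_div_sub_one_div {n m : ℚ} (hn : n ≠ 0) (hm : m ≠ 0) (k : ℚ) :
    2 * (k / (2 * n * m)) / (1 - 1 / n - 1 / m) = k / (n * m - n - m) := by
  rw [show 1 - 1 / n - 1 / m = (n * m - n - m) / (n * m) by field_simp; ring]
  rcases eq_or_ne (n * m - n - m) 0 with h | h
  · simp [h]
  · field_simp

lemma mul_sub_sub_pos {n m : ℚ} (hn : 2 ≤ n) (hm : 2 ≤ m) (h6 : 6 ≤ n * m) :
    0 < n * m - n - m := by
  nlinarith [mul_nonneg (sub_nonneg.2 hn) (sub_nonneg.2 hm)]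

/-- for `r` in the row span of `S(n,m)` with all entries nonzero, the Lyapunov
exponent `λ(r) = 2·min_j min(t_j(−r), 1−t_j(−r)) / (1 − 1/n − 1/m)` is a positive rational and
an integer multiple of `gcd(n,m)/(nm − n − m)`. -/
theorem stmt_13 (n m : ℕ) (hn : 1 < n) (hm : 1 < m) (h6 : 6 ≤ n * m)
    (r : Fin 4 → ZMod (2*n*m)) (hr : r ∈ rowSpan n m) (hnz : ∀ j, r j ≠ 0) :
    let lam : ℚ :=
      2 * (min (min (min (tfrac (-r 0)) (1 - tfrac (-r 0))) (min (tfrac (-r 1)) (1 - tfrac (-r 1))))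
            (min (min (tfrac (-r 2)) (1 - tfrac (-r 2))) (min (tfrac (-r 3)) (1 - tfrac (-r 3)))))
        / (1 - 1/(n:ℚ) - 1/(m:ℚ))
    0 < lam ∧ ∃ c : ℤ, lam = c * ((Nat.gcd n m : ℚ) / ((n:ℚ)*m - n - m)) := by
  intro lam
  have : NeZero (2*n*m) := ⟨by positivity⟩
  let a : Fin 4 → ℕ := fun j => (-r j).valMinAbs.natAbs
  let k := min (min (a 0) (a 1)) (min (a 2) (a 3))
  have hk : Nat.gcd n m ∣ k ∧ 0 < k := by
    have ha : ∀ j, Nat.gcd n m ∣ a j ∧ 0 < a j := fun j =>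
      ⟨Int.natCast_dvd.1 (gcd_dvd_valMinAbs_of_mem_rowSpan (neg_mem hr) j),
        by simpa [a, ZMod.valMinAbs_eq_zero] using hnz j⟩
    have hmin {x y : ℕ} := min_rec' (a := x) (b := y) fun z => Nat.gcd n m ∣ z ∧ 0 < z
    exact hmin (hmin (ha 0) (ha 1)) (hmin (ha 2) (ha 3))
  have hlam : lam = k / ((n:ℚ)*m - n - m) := by
    have hN : (0 : ℚ) < (2*n*m : ℕ) := by exact_mod_cast Nat.pos_of_neZero _
    simp only [lam, min_tfrac_one_sub_tfrac, min_div_div_right hN.le, ← Nat.cast_min]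
    rw [show ((2*n*m : ℕ) : ℚ) = 2 * n * m by push_cast; rfl]
    exact two_mul_div_div_one_sub_one_div_sub_one_div (by positivity) (by positivity) _
  obtain ⟨⟨c, hc⟩, hk0⟩ := hk
  refine ⟨hlam ▸ div_pos (by exact_mod_cast hk0) (mul_sub_sub_pos ?_ ?_ ?_), c, ?_⟩
  · exact_mod_cast hn
  · exact_mod_cast hm
  · exact_mod_cast h6
  · rw [hlam, hc]
    push_cast
    ring
end
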